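/- Define, for f ∈ (−1, 1), γ(f) = −3f/(2 + √(4 − 3f²)) and χ(f) = (1 + 3γ(f)²)/(3 + γ(f)²). Then 1/3 − χ(f) + f·χ'(f) ≥ 0 for every f ∈ (−1, 1), where χ' denotes the derivative of χ. -/
import Mathlib


/-- The auxiliary variable `γ(f) = −3f/(2 + √(4 − 3f²))` of the slab-geometry `M₁`
closure. -/
noncomputable def gammaM1 (f : ℝ) : ℝ := -3 * f / (2 + Real.sqrt (4 - 3 * f ^ 2))

/-- The Eddington factor `χ(f) = (1 + 3γ(f)²)/(3 + γ(f)²)`. -/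
noncomputable def chiM1 (f : ℝ) : ℝ := (1 + 3 * (gammaM1 f) ^ 2) / (3 + (gammaM1 f) ^ 2)

lemma chiM1_eq (f : ℝ) (hf : f ∈ Set.Ioo (-1 : ℝ) 1) :
    chiM1 f = (5 - 2 * Real.sqrt (4 - 3 * f ^ 2)) / 3 := by
  obtain ⟨h1, h2⟩ := hf
  have hf2 : f ^ 2 < 1 := by nlinarith
  have hpos : (0 : ℝ) < 4 - 3 * f ^ 2 := by nlinarith
  set s := Real.sqrt (4 - 3 * f ^ 2) with hs
  have hs0 : 0 < s := Real.sqrt_pos.mpr hpos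
  have hssq : s ^ 2 = 4 - 3 * f ^ 2 := Real.sq_sqrt hpos.le
  have h2s : (0 : ℝ) < 2 + s := by linarith
  have hγ : gammaM1 f = -3 * f / (2 + s) := rfl
  rw [chiM1, hγ]
  have hden : 3 + (-3 * f / (2 + s)) ^ 2 ≠ 0 := by positivity
  field_simp
  nlinarith [hssq, sq_nonneg s, sq_nonneg f, hs0, h2s, sq_nonneg (s*f), sq_nonneg (s+2)]

lemma deriv_chiM1 (f : ℝ) (hf : f ∈ Set.Ioo (-1 : ℝ) 1) :
    deriv chiM1 f = 2 * f / Real.sqrt (4 - 3 * f ^ 2) := by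
  obtain ⟨h1, h2⟩ := hf
  have hf2 : f ^ 2 < 1 := by nlinarith
  have hpos : (0 : ℝ) < 4 - 3 * f ^ 2 := by nlinarith
  have hs0 : 0 < Real.sqrt (4 - 3 * f ^ 2) := Real.sqrt_pos.mpr hpos
  have heq : chiM1 =ᶠ[nhds f] fun x => (5 - 2 * Real.sqrt (4 - 3 * x ^ 2)) / 3 := by
    filter_upwards [isOpen_Ioo.mem_nhds (show f ∈ Set.Ioo (-1:ℝ) 1 from ⟨h1, h2⟩)] with x hx
    exact chiM1_eq x hx
  rw [heq.deriv_eq]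
  have hinner : HasDerivAt (fun x : ℝ => 4 - 3 * x ^ 2) (-(6 * f)) f := by
    have : HasDerivAt (fun x : ℝ => 4 - 3 * x ^ 2) (0 - 3 * (2 * f ^ 1)) f := by
      exact (hasDerivAt_const f 4).sub (((hasDerivAt_pow 2 f)).const_mul 3)
    convert this using 1; ring
  have hsqrt : HasDerivAt (fun x : ℝ => Real.sqrt (4 - 3 * x ^ 2))
      (-(6 * f) / (2 * Real.sqrt (4 - 3 * f ^ 2))) f := hinner.sqrt hpos.ne'
  have hg : HasDerivAt (fun x : ℝ => (5 - 2 * Real.sqrt (4 - 3 * x ^ 2)) / 3)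
      ((0 - 2 * (-(6 * f) / (2 * Real.sqrt (4 - 3 * f ^ 2)))) / 3) f :=
    ((hasDerivAt_const f 5).sub (hsqrt.const_mul 2)).div_const 3
  rw [hg.deriv]
  field_simp
  ring

/-- `1/3 − χ(f) + f·χ'(f) ≥ 0` for every `f ∈ (−1, 1)`: the second inequality of
(eq:chi_ineq) in the proof of hyperbolicity of the perturbed `M₁` model. -/
theorem third_sub_chiM1_add_mul_deriv_nonneg :
    ∀ f : ℝ, f ∈ Set.Ioo (-1 : ℝ) 1 →
      0 ≤ 1 / 3 - chiM1 f + f * deriv chiM1 f := by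
  intro f hf
  obtain ⟨h1, h2⟩ := hf
  have hf2 : f ^ 2 < 1 := by nlinarith
  have hpos : (0 : ℝ) < 4 - 3 * f ^ 2 := by nlinarith
  rw [chiM1_eq f ⟨h1, h2⟩, deriv_chiM1 f ⟨h1, h2⟩]
  set s := Real.sqrt (4 - 3 * f ^ 2) with hs
  have hs0 : 0 < s := Real.sqrt_pos.mpr hpos
  have hssq : s ^ 2 = 4 - 3 * f ^ 2 := Real.sq_sqrt hpos.le
  have hsle : s ≤ 2 := by
    nlinarith [sq_nonneg f]
  have key : 1 / 3 - (5 - 2 * s) / 3 + f * (2 * f / s) = (8 - 4 * s) / (3 * s) := by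
    field_simp
    nlinarith [hssq]
  rw [key]
  apply div_nonneg (by linarith) (by linarith)
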